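/- arXiv:2312.05938 — 2 statements merged into one kernel-verified Lean document; each statement's English description precedes it below -/
import Mathlib

section
/- Let s ≥ 1 be an integer and let k, n be positive integers. Then c_k^{(s)}(n·(k*)^s) = (k*)^s · c_{k̄}^{(s)}(n), where k̄ is the largest squarefree divisor of k and k* = k/k̄. -/
open scoped BigOperators
open ArithmeticFunction

/-- Generalized gcd `(a,b)_s`: the largest `d ^ s` (with `d` a positive integer)
dividing both `a` and `b`. -/
def ggcd (s a b : ℕ) : ℕ :=
  (Nat.findGreatest (fun d => d ^ s ∣ a ∧ d ^ s ∣ b) (max a b)) ^ s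

/-- The Cohen–Ramanujan sum `c_k^{(s)}(n) = Σ_{h=1, (h,k^s)_s=1}^{k^s} e^{2πinh/k^s}`. -/
noncomputable def CRS (s k n : ℕ) : ℂ :=
  ∑ h ∈ Finset.Icc 1 (k ^ s),
    if ggcd s h (k ^ s) = 1 then
      Complex.exp (2 * Real.pi * Complex.I * n * h / (k ^ s))
    else 0

/-- The core of `k`: its largest squarefree divisor. -/
def core (k : ℕ) : ℕ := ∏ p ∈ k.primeFactors, p

/-- `k* = k / k̄`. -/
def spart (k : ℕ) : ℕ := k / core k

/-- `ξ_d(k) = d` if `d ∣ k`, and `0` otherwise. -/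
def xi (d k : ℕ) : ℕ := if d ∣ k then d else 0

/-- Klee's function `Φ_s(n) = n ∏_{p prime, p^s ∣ n} (1 - 1/p^s)`. -/
noncomputable def Klee (s n : ℕ) : ℂ :=
  n * ∏ p ∈ n.primeFactors.filter (fun p => p ^ s ∣ n), (1 - 1 / (p : ℂ) ^ s)

/-- The Jordan totient function `J_s(n) = n^s ∏_{p ∣ n} (1 - 1/p^s)` (as a complex number). -/
noncomputable def Jordan (s n : ℕ) : ℂ :=
  (n : ℂ) ^ s * ∏ p ∈ n.primeFactors, (1 - 1 / (p : ℂ) ^ s)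

lemma ggcd_eq_one_iff {s a b : ℕ} (hs : 1 ≤ s) (ha : 0 < a) :
    ggcd s a b = 1 ↔ ∀ p : ℕ, p.Prime → ¬(p ^ s ∣ a ∧ p ^ s ∣ b) := by
  unfold ggcd
  set P : ℕ → Prop := fun d => d ^ s ∣ a ∧ d ^ s ∣ b with hP
  constructor
  · intro h p hp ⟨hpa, hpb⟩
    have hg1 : Nat.findGreatest P (max a b) = 1 := by
      set g := Nat.findGreatest P (max a b) with hg
      rcases Nat.lt_or_ge g 2 with h2 | h2
      · interval_cases g
        · rw [Nat.zero_pow (by omega)] at h; omega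
        · rfl
      · have := Nat.one_lt_pow (n := s) (by omega) h2; omega
    have hps : p ≤ p ^ s := Nat.le_self_pow (by omega) p
    have hle : p ≤ max a b := le_trans (le_trans hps (Nat.le_of_dvd ha hpa)) (le_max_left a b)
    have := Nat.le_findGreatest (P := P) hle (by exact ⟨hpa, hpb⟩)
    have := hp.one_lt
    omega
  · intro h
    have hg1 : Nat.findGreatest P (max a b) = 1 := by
      have hge : 1 ≤ Nat.findGreatest P (max a b) := by
        apply Nat.le_findGreatest (le_trans ha (le_max_left a b))
        simp [hP]
      rcases Nat.lt_or_ge (Nat.findGreatest P (max a b)) 2 with h2 | h2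
      · omega
      · exfalso
        set g := Nat.findGreatest P (max a b) with hg
        have hPg : P g := Nat.findGreatest_spec (P := P) (le_trans ha (le_max_left a b))
          (by simp [hP])
        obtain ⟨p, hp, hpg⟩ := Nat.exists_prime_and_dvd (n := g) (by omega)
        exact h p hp ⟨dvd_trans (pow_dvd_pow_of_dvd hpg s) hPg.1,
          dvd_trans (pow_dvd_pow_of_dvd hpg s) hPg.2⟩
    rw [hg1, one_pow]

lemma core_dvd (k : ℕ) : core k ∣ k := Nat.prod_primeFactors_dvd k

lemma core_pos {k : ℕ} (hk : 0 < k) : 0 < core k :=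
  Finset.prod_pos fun p hp => (Nat.prime_of_mem_primeFactors hp).pos

lemma prime_dvd_core_iff {k p : ℕ} (hk : 0 < k) (hp : p.Prime) : p ∣ core k ↔ p ∣ k := by
  constructor
  · intro h; exact dvd_trans h (core_dvd k)
  · intro h
    exact Finset.dvd_prod_of_mem _ (Nat.mem_primeFactors.2 ⟨hp, h, hk.ne'⟩)

lemma cond_transfer {s k : ℕ} (hs : 1 ≤ s) (hk : 0 < k) (q r : ℕ) (hr : 0 < r) :
    ggcd s (q * (core k) ^ s + r) (k ^ s) = 1 ↔ ggcd s r ((core k) ^ s) = 1 := by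
  rw [ggcd_eq_one_iff hs (by positivity), ggcd_eq_one_iff hs hr]
  constructor
  · intro H p hp ⟨h1, h2⟩
    have hpc : p ∣ core k := (Nat.pow_dvd_pow_iff (by omega)).1 h2
    have hpk : p ∣ k := (prime_dvd_core_iff hk hp).1 hpc
    refine H p hp ⟨?_, (Nat.pow_dvd_pow_iff (a := p) (b := k) (by omega)).2 hpk⟩
    exact dvd_add (Dvd.dvd.mul_left (pow_dvd_pow_of_dvd hpc s) q) h1
  · intro H p hp ⟨h1, h2⟩
    have hpk : p ∣ k := (Nat.pow_dvd_pow_iff (by omega)).1 h2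
    have hpc : p ∣ core k := (prime_dvd_core_iff hk hp).2 hpk
    have hpcs : p ^ s ∣ (core k) ^ s := pow_dvd_pow_of_dvd hpc s
    refine H p hp ⟨?_, hpcs⟩
    exact (Nat.dvd_add_right (Dvd.dvd.mul_left hpcs q)).1 h1

/-- `c_k^{(s)}(n·(k*)^s) = (k*)^s · c_{k̄}^{(s)}(n)`. -/
theorem CRS_core_spart (s : ℕ) (hs : 1 ≤ s) (k n : ℕ) (hk : 0 < k) (hn : 0 < n) :
    CRS s k (n * (spart k) ^ s) = ((spart k : ℂ)) ^ s * CRS s (core k) n := by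
  set c := core k with hc
  set t := spart k with ht
  have hct : c * t = k := Nat.mul_div_cancel' (core_dvd k)
  have hcpos : 0 < c := core_pos hk
  have htpos : 0 < t := Nat.div_pos (Nat.le_of_dvd hk (core_dvd k)) hcpos
  set K := c ^ s with hKdef
  set T := t ^ s with hTdef
  have hkK : k ^ s = K * T := by rw [← hct, mul_pow]
  have hKpos : 0 < K := pow_pos hcpos s
  have hTpos : 0 < T := pow_pos htpos s
  have hKC : (K : ℂ) ≠ 0 := Nat.cast_ne_zero.2 hKpos.ne'
  have hTC : (T : ℂ) ≠ 0 := Nat.cast_ne_zero.2 hTpos.ne'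
  have key : ∑ p ∈ Finset.range T ×ˢ Finset.Icc 1 K,
        (if ggcd s p.2 K = 1 then
          Complex.exp (2 * Real.pi * Complex.I * n * p.2 / K) else 0)
      = ∑ h ∈ Finset.Icc 1 (k ^ s),
        (if ggcd s h (k ^ s) = 1 then
          Complex.exp (2 * Real.pi * Complex.I * (n * T : ℕ) * h / ((k : ℕ) ^ s)) else 0) := by
    refine Finset.sum_nbij' (fun p : ℕ × ℕ => p.1 * K + p.2)
      (fun h : ℕ => ((h - 1) / K, (h - 1) % K + 1)) ?_ ?_ ?_ ?_ ?_
    · rintro ⟨q, r⟩ hqr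
      simp only [Finset.mem_product, Finset.mem_range, Finset.mem_Icc] at hqr
      obtain ⟨hq, hr1, hr2⟩ := hqr
      simp only [Finset.mem_Icc]
      constructor
      · omega
      · calc q * K + r ≤ q * K + K := by omega
          _ = (q + 1) * K := by ring
          _ ≤ T * K := Nat.mul_le_mul_right _ (by omega)
          _ = k ^ s := by rw [hkK, mul_comm]
    · intro h hh
      simp only [Finset.mem_Icc] at hh
      simp only [Finset.mem_product, Finset.mem_range, Finset.mem_Icc]
      refine ⟨?_, by omega, by have := Nat.mod_lt (h - 1) hKpos; omega⟩
      have : h - 1 < T * K := by rw [mul_comm, ← hkK]; omega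
      exact Nat.div_lt_of_lt_mul (by rwa [mul_comm] at this)
    · rintro ⟨q, r⟩ hqr
      simp only [Finset.mem_product, Finset.mem_range, Finset.mem_Icc] at hqr
      obtain ⟨hq, hr1, hr2⟩ := hqr
      have e1 : q * K + r - 1 = K * q + (r - 1) := by ring_nf; omega
      have hdiv : (q * K + r - 1) / K = q := by
        rw [e1, Nat.mul_add_div hKpos, Nat.div_eq_of_lt (by omega)]
        omega
      have hmod : (q * K + r - 1) % K = r - 1 := by
        rw [e1, Nat.mul_add_mod, Nat.mod_eq_of_lt (by omega)]
      simp [hdiv, hmod]; omega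
    · intro h hh
      simp only [Finset.mem_Icc] at hh
      have := Nat.div_add_mod (h - 1) K
      simp only []
      rw [mul_comm, add_comm ((h-1) % K) 1, ← add_assoc]
      omega
    · rintro ⟨q, r⟩ hqr
      simp only [Finset.mem_product, Finset.mem_range, Finset.mem_Icc] at hqr
      obtain ⟨hq, hr1, hr2⟩ := hqr
      simp only []
      have hiff := cond_transfer hs hk q r (by omega)
      by_cases hcond : ggcd s r K = 1
      · rw [if_pos hcond, if_pos (hiff.2 hcond)]
        have e2 : 2 * (Real.pi : ℂ) * Complex.I * ((n * T : ℕ) : ℂ) * ((q * K + r : ℕ) : ℂ)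
              / ((k : ℂ) ^ s)
            = ((n * q : ℕ) : ℂ) * (2 * Real.pi * Complex.I)
              + 2 * Real.pi * Complex.I * n * r / (K : ℂ) := by
          have hkc : (k : ℂ) ^ s = (K : ℂ) * T := by
            rw [← Nat.cast_pow, hkK]; push_cast; ring
          rw [hkc]
          push_cast
          field_simp
        rw [e2, Complex.exp_add]
        have e3 : Complex.exp (((n * q : ℕ) : ℂ) * (2 * Real.pi * Complex.I)) = 1 := by
          have := Complex.exp_int_mul_two_pi_mul_I ((n * q : ℕ) : ℤ)
          push_cast at this ⊢
          convert this using 2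
        rw [e3, one_mul]
      · rw [if_neg hcond, if_neg (fun hx => hcond (hiff.1 hx))]
  unfold CRS
  rw [← key, Finset.sum_product]
  simp only [Finset.sum_const, Finset.card_range]
  rw [nsmul_eq_mul, hKdef, hTdef]
  push_cast
  ring
end

section
/- Let s ≥ 1 be an integer and let k, n be positive integers. Then c_k^{(s)}(n) = Σ_{d : d | k and d^s | n} μ(k/d)·d^s, where μ is the Möbius function. -/
open scoped BigOperators
open ArithmeticFunction
open scoped ArithmeticFunction.Moebius

/-!
The condition `(h, k^s)_s = 1` is detected by Möbius inversion: the `d ∣ k` with `d^s ∣ h` are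
exactly the divisors of the base of `(h, k^s)_s`, so its indicator is `∑_{d ∣ k, d^s ∣ h} μ(d)`.
After swapping the sums, the inner sum runs over the multiples `h = d^s m` of `d^s` in
`[1, k^s]`, and `e^{2πinh/k^s} = e^{2πinm/(k/d)^s}` makes it a complete sum of `(k/d)^s`-th
roots of unity, equal to `(k/d)^s` or `0` according as `(k/d)^s ∣ n` or not.
-/

open Finset

lemma ggcd_eq_findGreatest_pow (s a b : ℕ) :
    ggcd s a b = Nat.findGreatest (fun d => d ^ s ∣ Nat.gcd a b) (max a b) ^ s := by
  simp only [ggcd, Nat.dvd_gcd_iff]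

/-- The `d` with `d ^ s ∣ c` are closed under `lcm`, so they are the divisors of the largest one. -/
lemma dvd_findGreatest_iff_pow_dvd {s c N d : ℕ} (hs : s ≠ 0) (hc : c ≠ 0) (hcN : c ≤ N) :
    d ∣ Nat.findGreatest (fun d => d ^ s ∣ c) N ↔ d ^ s ∣ c := by
  have hr : Nat.findGreatest (fun d => d ^ s ∣ c) N ^ s ∣ c :=
    Nat.findGreatest_spec (P := fun d => d ^ s ∣ c) (m := 1) (by omega) (by simp)
  set r := Nat.findGreatest (fun d => d ^ s ∣ c) N
  refine ⟨fun hdr => (pow_dvd_pow_of_dvd hdr s).trans hr, fun hd => ?_⟩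
  have hd0 : d ≠ 0 := fun h0 => hc (by simpa [h0, zero_pow hs] using hd)
  have hr0 : r ≠ 0 := fun h0 => hc (by simpa [h0, zero_pow hs] using hr)
  have hlcm : Nat.lcm d r ^ s ∣ c := by
    rw [← Nat.pow_lcm_pow]
    exact Nat.lcm_dvd hd hr
  have hle : Nat.lcm d r ≤ r :=
    Nat.le_findGreatest
      ((Nat.le_self_pow hs _).trans ((Nat.le_of_dvd (by omega) hlcm).trans hcN)) hlcm
  have heq : Nat.lcm d r = r :=
    le_antisymm hle (Nat.le_of_dvd (Nat.pos_of_ne_zero (Nat.lcm_ne_zero hd0 hr0))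
      (Nat.dvd_lcm_right d r))
  exact heq ▸ Nat.dvd_lcm_left d r

lemma sum_divisors_moebius (R : Type*) [Ring R] (n : ℕ) :
    ∑ d ∈ n.divisors, (μ d : R) = if n = 1 then 1 else 0 := by
  simpa only [coe_mul_zeta_apply, intCoe_apply, one_apply] using
    congr($(coe_moebius_mul_coe_zeta (R := R)) n)

lemma ite_ggcd_eq_one_eq_sum_moebius (R : Type*) [Ring R] {s h k : ℕ} (hs : s ≠ 0)
    (hh : h ≠ 0) (hk : k ≠ 0) :
    (if ggcd s h (k ^ s) = 1 then 1 else 0 : R) = ∑ d ∈ k.divisors with d ^ s ∣ h, (μ d : R) := by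
  set g := Nat.findGreatest (fun d => d ^ s ∣ Nat.gcd h (k ^ s)) (max h (k ^ s))
  have hg (d : ℕ) : d ∣ g ↔ d ∣ k ∧ d ^ s ∣ h := by
    rw [dvd_findGreatest_iff_pow_dvd hs (Nat.gcd_ne_zero_left hh)
      ((Nat.gcd_le_left _ (Nat.pos_of_ne_zero hh)).trans (le_max_left _ _)),
      Nat.dvd_gcd_iff, Nat.pow_dvd_pow_iff hs, and_comm]
  have hg0 : g ≠ 0 := fun h0 => hh (by simpa [zero_pow hs] using ((hg 0).1 (h0 ▸ dvd_rfl)).2)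
  have hdivisors : {d ∈ k.divisors | d ^ s ∣ h} = g.divisors := by
    ext d
    simp [hg, hg0, hk]
  have hggcd : ggcd s h (k ^ s) = 1 ↔ g = 1 := by
    rw [ggcd_eq_findGreatest_pow, Nat.pow_eq_one, or_iff_left hs]
  simp only [hggcd, hdivisors, sum_divisors_moebius]

lemma sum_Icc_mul_filter_dvd {β : Type*} [AddCommMonoid β] (f : ℕ → β) {a : ℕ} (ha : a ≠ 0)
    (b : ℕ) : ∑ h ∈ Icc 1 (a * b) with a ∣ h, f h = ∑ m ∈ Icc 1 b, f (a * m) := by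
  have ha' : 0 < a := Nat.pos_of_ne_zero ha
  refine (sum_nbij' (a * ·) (· / a) ?_ ?_ ?_ ?_ fun _ _ => rfl).symm
  · intro m hm
    simp only [mem_filter, mem_Icc] at hm ⊢
    exact ⟨⟨by nlinarith, Nat.mul_le_mul_left a hm.2⟩, dvd_mul_right a m⟩
  · intro h hh
    simp only [mem_filter, mem_Icc] at hh ⊢
    obtain ⟨⟨h1, h2⟩, m, rfl⟩ := hh
    rw [Nat.mul_div_cancel_left m ha']
    exact ⟨Nat.pos_of_ne_zero (by rintro rfl; omega), Nat.le_of_mul_le_mul_left h2 ha'⟩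
  · intro m _
    exact Nat.mul_div_cancel_left m ha'
  · intro h hh
    exact Nat.mul_div_cancel' (mem_filter.1 hh).2

namespace IsPrimitiveRoot

variable {R : Type*} [CommRing R] [IsDomain R] {ζ : R}

lemma sum_Icc_pow_mul {M : ℕ} (hζ : IsPrimitiveRoot ζ M) (n : ℕ) :
    ∑ m ∈ Icc 1 M, ζ ^ (n * m) = if M ∣ n then (M : R) else 0 := by
  split_ifs with hMn
  · simp [pow_mul, (hζ.pow_eq_one_iff_dvd n).2 hMn]
  have hne : ζ ^ n ≠ 1 := mt (hζ.pow_eq_one_iff_dvd n).1 hMn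
  have hM : (ζ ^ n) ^ M = 1 := by rw [← pow_mul, mul_comm, pow_mul, hζ.pow_eq_one, one_pow]
  have hgeom : ∑ m ∈ range M, (ζ ^ n) ^ m = 0 := by
    have := geom_sum_mul (ζ ^ n) M
    rw [hM, sub_self] at this
    exact (mul_eq_zero.1 this).resolve_right (sub_ne_zero.2 hne)
  rw [← Ico_add_one_right_eq_Icc, sum_Ico_eq_sum_range, Nat.add_sub_cancel]
  simp_rw [mul_add, pow_add, mul_one, pow_mul, ← mul_sum, hgeom, mul_zero]

lemma sum_Icc_filter_pow_dvd {s k d : ℕ} (hζ : IsPrimitiveRoot ζ (k ^ s)) (hk : k ≠ 0)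
    (hd : d ∣ k) (n : ℕ) :
    ∑ h ∈ Icc 1 (k ^ s) with d ^ s ∣ h, ζ ^ (n * h) =
      if (k / d) ^ s ∣ n then (((k / d) ^ s : ℕ) : R) else 0 := by
  have hd0 : d ≠ 0 := ne_zero_of_dvd_ne_zero hk hd
  have hζd : IsPrimitiveRoot (ζ ^ d ^ s) ((k / d) ^ s) := by
    simpa only [Nat.div_pow hd] using hζ.pow_of_dvd (pow_ne_zero s hd0) (pow_dvd_pow_of_dvd hd s)
  rw [← Nat.mul_div_cancel' hd, mul_pow, sum_Icc_mul_filter_dvd _ (pow_ne_zero s hd0),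
    Nat.mul_div_cancel_left _ (Nat.pos_of_ne_zero hd0), ← hζd.sum_Icc_pow_mul n]
  simp_rw [← pow_mul, mul_left_comm]

theorem sum_ggcd_eq_one_pow_mul {s k : ℕ} (hζ : IsPrimitiveRoot ζ (k ^ s)) (hs : s ≠ 0)
    (hk : k ≠ 0) (n : ℕ) :
    ∑ h ∈ Icc 1 (k ^ s), (if ggcd s h (k ^ s) = 1 then ζ ^ (n * h) else 0) =
      ∑ d ∈ k.divisors with d ^ s ∣ n, (μ (k / d) : R) * (d : R) ^ s := by
  calc _ = ∑ h ∈ Icc 1 (k ^ s), ∑ d ∈ k.divisors with d ^ s ∣ h, (μ d : R) * ζ ^ (n * h) := by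
        refine sum_congr rfl fun h hh => ?_
        have hh0 : h ≠ 0 := Nat.one_le_iff_ne_zero.1 (mem_Icc.1 hh).1
        rw [← sum_mul, ← ite_ggcd_eq_one_eq_sum_moebius R hs hh0 hk, ite_zero_mul, one_mul]
    _ = ∑ d ∈ k.divisors, (μ d : R) * ∑ h ∈ Icc 1 (k ^ s) with d ^ s ∣ h, ζ ^ (n * h) := by
        simp_rw [sum_filter, mul_sum, mul_ite, mul_zero]
        exact sum_comm
    _ = ∑ d ∈ k.divisors, (μ d : R) * if (k / d) ^ s ∣ n then (((k / d) ^ s : ℕ) : R) else 0 :=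
        sum_congr rfl fun d hd => by
          rw [hζ.sum_Icc_filter_pow_dvd hk (Nat.dvd_of_mem_divisors hd)]
    _ = ∑ d ∈ k.divisors, if d ^ s ∣ n then (μ (k / d) : R) * (d : R) ^ s else 0 := by
        rw [← Nat.sum_div_divisors]
        refine sum_congr rfl fun d hd => ?_
        rw [Nat.div_div_self (Nat.dvd_of_mem_divisors hd) hk]
        split_ifs <;> simp
    _ = _ := (sum_filter _ _).symm

end IsPrimitiveRoot

theorem CRS_eq_sum_moebius_general (s : ℕ) (hs : 1 ≤ s) (k n : ℕ) :
    CRS s k n =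
      ∑ d ∈ k.divisors.filter (fun d => d ^ s ∣ n), (μ (k / d) : ℂ) * (d : ℂ) ^ s := by
  rcases Nat.eq_zero_or_pos k with rfl | hk
  · simp [CRS, zero_pow (by omega : s ≠ 0)]
  have hζ := Complex.isPrimitiveRoot_exp (k ^ s) (by positivity)
  rw [← hζ.sum_ggcd_eq_one_pow_mul (by omega) hk.ne' n, CRS]
  refine sum_congr rfl fun h _ => ?_
  rw [← Complex.exp_nat_mul]
  push_cast
  ring_nf

/-- `c_k^{(s)}(n) = Σ_{d ∣ k, d^s ∣ n} μ(k/d)·d^s`. -/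
theorem CRS_eq_sum_moebius (s : ℕ) (hs : 1 ≤ s) (k n : ℕ) (hk : 0 < k) (hn : 0 < n) :
    CRS s k n =
      ∑ d ∈ k.divisors.filter (fun d => d ^ s ∣ n), (μ (k / d) : ℂ) * (d : ℂ) ^ s :=
  CRS_eq_sum_moebius_general s hs k n
end
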